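/- arXiv:1303.3222 — 5 statements merged into one kernel-verified Lean document; each statement's English description precedes it below -/
import Mathlib

section
/- If G ⪰ H (i.e., I(H,x) ≥ I(G,x) for all x in [ξ(G),0]), then ξ(G) ≥ ξ(H), where ξ denotes the largest real root of the independence polynomial. -/
open Finset

open scoped Classical in
/-- The independence polynomial of `G` evaluated at `x`:
`I(G,x)` is the sum of `x^|s|` over all independent sets `s` of `G`. -/
noncomputable def indepPoly {V : Type*} [Fintype V] (G : SimpleGraph V) (x : ℝ) : ℝ :=
  ∑ s ∈ (Finset.univ : Finset (Finset V)).filter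
      (fun s => ∀ u ∈ s, ∀ v ∈ s, ¬ G.Adj u v), x ^ s.card

/-- `ξ` is the largest real root of the independence polynomial of `G`. -/
noncomputable def IsLargestRoot {V : Type*} [Fintype V] (G : SimpleGraph V) (ξ : ℝ) : Prop :=
  indepPoly G ξ = 0 ∧ ∀ y : ℝ, indepPoly G y = 0 → y ≤ ξ

lemma indepPoly_pos {V : Type*} [Fintype V] (G : SimpleGraph V) {x : ℝ} (hx : 0 ≤ x) :
    0 < indepPoly G x := by
  classical
  unfold indepPoly
  apply Finset.sum_pos'
  · intro s _
    exact pow_nonneg hx _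
  · exact ⟨∅, by simp, by simp⟩

lemma indepPoly_continuous {V : Type*} [Fintype V] (G : SimpleGraph V) :
    Continuous (indepPoly G) := by
  classical
  unfold indepPoly
  exact continuous_finset_sum _ fun s _ => continuous_pow _

/-- If `G ⪰ H`, i.e. `I(H,x) ≥ I(G,x)` for all `x ∈ [ξ(G),0]`, then `ξ(G) ≥ ξ(H)`. -/
theorem xi_le_of_indepOrder {VG VH : Type*} [Fintype VG] [Fintype VH]
    (G : SimpleGraph VG) (H : SimpleGraph VH) (ξG ξH : ℝ)
    (hG : IsLargestRoot G ξG) (hH : IsLargestRoot H ξH)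
    (hGH : ∀ x ∈ Set.Icc ξG (0 : ℝ), indepPoly G x ≤ indepPoly H x) :
    ξH ≤ ξG := by
  by_contra hc
  push_neg at hc
  have hH0 : ξH ≤ 0 := by
    by_contra h
    push_neg at h
    exact (indepPoly_pos H h.le).ne' hH.1
  have h1 : indepPoly G ξH ≤ 0 := (hGH ξH ⟨hc.le, hH0⟩).trans_eq hH.1
  have h2 : (0 : ℝ) ∈ Set.Icc (indepPoly G ξH) (indepPoly G 0) :=
    ⟨h1, (indepPoly_pos G le_rfl).le⟩
  obtain ⟨c, hcmem, hcz⟩ :=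
    intermediate_value_Icc hH0 (indepPoly_continuous G).continuousOn h2
  exact absurd (hG.2 c hcz) (not_le.mpr (lt_of_lt_of_le hc hcmem.1))
end

section
/- If G₁ ⪰ G₂ and H₁ ⪰ H₂, then G₁ + H₁ ⪰ G₂ + H₂, where + denotes disjoint union of graphs. -/
open Finset

lemma indepPoly_sum {A B : Type*} [Fintype A] [Fintype B]
    (G : SimpleGraph A) (H : SimpleGraph B) (x : ℝ) :
    indepPoly (G.sum H) x = indepPoly G x * indepPoly H x := by
  classical
  unfold indepPoly
  rw [Finset.sum_mul_sum, ← Finset.sum_product']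
  refine Finset.sum_nbij' (i := fun (u : Finset (A ⊕ B)) => (u.toLeft, u.toRight))
    (j := fun (p : Finset A × Finset B) => p.1.disjSum p.2) ?_ ?_ ?_ ?_ ?_
  · intro u hu
    simp only [mem_filter, mem_univ, true_and, Finset.mem_product] at hu ⊢
    constructor
    · intro a ha b hb
      have := hu _ (Finset.mem_toLeft.1 ha) _ (Finset.mem_toLeft.1 hb)
      simpa using this
    · intro a ha b hb
      have := hu _ (Finset.mem_toRight.1 ha) _ (Finset.mem_toRight.1 hb)
      simpa using this
  · intro p hp
    simp only [Finset.mem_product, mem_filter, mem_univ, true_and] at hp ⊢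
    rintro u hu v hv
    rcases u with a | a <;> rcases v with b | b <;>
      simp only [Finset.inl_mem_disjSum, Finset.inr_mem_disjSum, SimpleGraph.sum_adj] at hu hv ⊢
    · exact hp.1 _ hu _ hv
    · simp
    · simp
    · exact hp.2 _ hu _ hv
  · intro u hu; exact Finset.toLeft_disjSum_toRight (u := u)
  · intro p hp; simp
  · intro u hu
    rw [← Finset.card_toLeft_add_card_toRight (u := u), pow_add]

lemma indepPoly_zero {V : Type*} [Fintype V] (G : SimpleGraph V) :
    indepPoly G 0 = 1 := by
  classical
  unfold indepPoly
  rw [Finset.sum_eq_single (∅ : Finset V)]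
  · simp
  · intro s hs hne
    rw [zero_pow]
    simpa using hne
  · intro h
    exact absurd (by simp) h

lemma indepPoly_nonneg {V : Type*} [Fintype V] {G : SimpleGraph V} {ξ : ℝ}
    (h : IsLargestRoot G ξ) : ∀ x ∈ Set.Icc ξ (0 : ℝ), 0 ≤ indepPoly G x := by
  intro x hx
  by_contra hneg
  push_neg at hneg
  have hx0 : x ≤ 0 := hx.2
  have h0 : (0 : ℝ) ∈ Set.Icc (indepPoly G x) (indepPoly G 0) := by
    rw [indepPoly_zero]; exact ⟨hneg.le, zero_le_one⟩
  obtain ⟨y, hy, hy0⟩ := intermediate_value_Icc hx0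
    (indepPoly_continuous G).continuousOn h0
  have hyξ : y ≤ ξ := h.2 y hy0
  have hxξ : x = ξ := le_antisymm (hy.1.trans hyξ) hx.1
  rw [hxξ, h.1] at hneg
  exact lt_irrefl _ hneg

/-- If `G₁ ⪰ G₂` and `H₁ ⪰ H₂`, then `G₁ + H₁ ⪰ G₂ + H₂`, where `+` is
disjoint union (`SimpleGraph.sum`, on the sum type). -/
theorem indepOrder_disjUnion {A₁ A₂ B₁ B₂ : Type*}
    [Fintype A₁] [Fintype A₂] [Fintype B₁] [Fintype B₂]
    (G₁ : SimpleGraph A₁) (G₂ : SimpleGraph A₂)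
    (H₁ : SimpleGraph B₁) (H₂ : SimpleGraph B₂)
    (ξG₁ ξH₁ ξS : ℝ)
    (hG₁ : IsLargestRoot G₁ ξG₁) (hH₁ : IsLargestRoot H₁ ξH₁)
    (hS : IsLargestRoot (G₁.sum H₁) ξS)
    (h1 : ∀ x ∈ Set.Icc ξG₁ (0 : ℝ), indepPoly G₁ x ≤ indepPoly G₂ x)
    (h2 : ∀ x ∈ Set.Icc ξH₁ (0 : ℝ), indepPoly H₁ x ≤ indepPoly H₂ x) :
    ∀ x ∈ Set.Icc ξS (0 : ℝ), indepPoly (G₁.sum H₁) x ≤ indepPoly (G₂.sum H₂) x := by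
  have hGS : ξG₁ ≤ ξS := hS.2 ξG₁ (by rw [indepPoly_sum, hG₁.1, zero_mul])
  have hHS : ξH₁ ≤ ξS := hS.2 ξH₁ (by rw [indepPoly_sum, hH₁.1, mul_zero])
  intro x hx
  have hxG : x ∈ Set.Icc ξG₁ (0 : ℝ) := ⟨hGS.trans hx.1, hx.2⟩
  have hxH : x ∈ Set.Icc ξH₁ (0 : ℝ) := ⟨hHS.trans hx.1, hx.2⟩
  rw [indepPoly_sum, indepPoly_sum]
  have hG1 : 0 ≤ indepPoly G₁ x := indepPoly_nonneg hG₁ x hxG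
  have hH1 : 0 ≤ indepPoly H₁ x := indepPoly_nonneg hH₁ x hxH
  exact mul_le_mul (h1 x hxG) (h2 x hxH) hH1 (hG1.trans (h1 x hxG))
end

section
/- Let G, H be graphs with edges e ∈ E(G), e' ∈ E(H). If G∖e ⪰ H∖e' and H∖[e'] ⪰ G∖[e], then G ⪰ H. -/
open Finset

open Topology

open scoped Classical in
noncomputable def J {V : Type*} [Fintype V] (G : SimpleGraph V) (A : Set V) (x : ℝ) : ℝ :=
  ∑ s ∈ (Finset.univ : Finset (Finset V)).filter
      (fun s => ↑s ⊆ A ∧ ∀ u ∈ s, ∀ v ∈ s, ¬ G.Adj u v), x ^ s.card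

section lemmas
variable {V : Type*} [Fintype V] (G : SimpleGraph V)

lemma J_univ (x : ℝ) : indepPoly G x = J G Set.univ x := by
  classical
  unfold indepPoly J
  apply Finset.sum_congr
  · apply Finset.filter_congr; intro s _; simp
  · intros; rfl

lemma J_congr {G' : SimpleGraph V} {A : Set V}
    (h : ∀ a ∈ A, ∀ b ∈ A, G.Adj a b ↔ G'.Adj a b) (x : ℝ) : J G A x = J G' A x := by
  classical
  unfold J
  apply Finset.sum_congr
  · apply Finset.filter_congr; intro s _
    constructor
    · rintro ⟨hs, hind⟩
      exact ⟨hs, fun u hu v hv hadj => hind u hu v hv ((h u (hs hu) v (hs hv)).2 hadj)⟩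
    · rintro ⟨hs, hind⟩
      exact ⟨hs, fun u hu v hv hadj => hind u hu v hv ((h u (hs hu) v (hs hv)).1 hadj)⟩
  · intros; rfl

lemma J_induce (A : Set V) [Fintype A] (x : ℝ) : indepPoly (G.induce A) x = J G A x := by
  classical
  unfold indepPoly J
  refine Finset.sum_nbij' (fun s => s.map (Function.Embedding.subtype _))
    (fun s => s.subtype (· ∈ A)) ?_ ?_ ?_ ?_ ?_
  · intro s hs
    simp only [mem_filter, mem_univ, true_and] at hs ⊢
    constructor
    · intro a ha
      simp only [coe_map, Set.mem_image] at ha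
      obtain ⟨b, _, rfl⟩ := ha
      exact b.2
    · intro u hu v hv hadj
      simp only [Finset.mem_map, Function.Embedding.coe_subtype] at hu hv
      obtain ⟨u', hu', rfl⟩ := hu
      obtain ⟨v', hv', rfl⟩ := hv
      exact hs u' hu' v' hv' hadj
  · intro s hs
    simp only [mem_filter, mem_univ, true_and] at hs ⊢
    intro u hu v hv hadj
    simp only [Finset.mem_subtype] at hu hv
    exact hs.2 u hu v hv hadj
  · intro s hs
    ext u
    simp only [Finset.mem_map, Finset.mem_subtype, Function.Embedding.coe_subtype]
    constructor
    · rintro ⟨v, hv, h2⟩; obtain rfl := Subtype.ext h2; exact hv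
    · intro hu; exact ⟨u, hu, rfl⟩
  · intro s hs
    simp only [mem_filter, mem_univ, true_and] at hs
    ext u
    simp only [Finset.mem_subtype, Finset.mem_map, Function.Embedding.coe_subtype]
    constructor
    · rintro ⟨v, hv, hv2⟩; subst hv2; exact hv
    · intro hu; exact ⟨⟨u, hs.1 hu⟩, hu, rfl⟩
  · intro s hs
    rw [Finset.card_map]

lemma J_continuous (A : Set V) : Continuous (J G A) := by
  unfold J
  exact continuous_finset_sum _ (fun s _ => continuous_pow s.card)

lemma J_zero (A : Set V) : J G A 0 = 1 := by
  classical
  unfold J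
  rw [Finset.sum_eq_single (∅ : Finset V)]
  · simp
  · intro s hs hne
    rw [zero_pow]
    simpa using hne
  · intro h
    exact absurd (by simp : (∅:Finset V) ∈ _) h

lemma J_one_le (A : Set V) {x : ℝ} (hx : 0 ≤ x) : 1 ≤ J G A x := by
  classical
  unfold J
  have h : ((∅:Finset V) ∈ (Finset.univ : Finset (Finset V)).filter
      (fun s => ↑s ⊆ A ∧ ∀ u ∈ s, ∀ v ∈ s, ¬ G.Adj u v)) := by simp
  calc (1:ℝ) = x ^ (∅:Finset V).card := by simp
  _ ≤ _ := Finset.single_le_sum (fun s _ => pow_nonneg hx _) h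

lemma J_vertex_rec (A : Set V) {v : V} (hv : v ∈ A) (x : ℝ) :
    J G A x = J G (A \ {v}) x + x * J G (A \ ({v} ∪ G.neighborSet v)) x := by
  classical
  unfold J
  rw [← Finset.sum_filter_add_sum_filter_not _ (fun s => v ∈ s)]
  rw [add_comm]
  congr 1
  · rw [Finset.filter_filter]
    apply Finset.sum_congr
    · apply Finset.filter_congr
      intro s _
      constructor
      · rintro ⟨⟨hsub, hind⟩, hvn⟩
        refine ⟨fun u hu => ⟨hsub hu, ?_⟩, hind⟩
        rintro rfl; exact hvn hu
      · rintro ⟨hsub, hind⟩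
        exact ⟨⟨fun u hu => (hsub hu).1, hind⟩, fun hvs => (hsub hvs).2 rfl⟩
    · intros; rfl
  · -- sets containing v
    rw [Finset.mul_sum]
    rw [Finset.filter_filter]
    refine Finset.sum_nbij' (fun s => s.erase v) (fun t => insert v t) ?_ ?_ ?_ ?_ ?_
    · intro s hs
      simp only [mem_filter, mem_univ, true_and] at hs ⊢
      obtain ⟨⟨hsub, hind⟩, hvs⟩ := hs
      refine ⟨?_, fun u hu w hw => hind u (Finset.mem_of_mem_erase hu) w (Finset.mem_of_mem_erase hw)⟩
      intro u hu
      have hus : u ∈ s := Finset.mem_of_mem_erase hu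
      have hne : u ≠ v := Finset.ne_of_mem_erase hu
      refine ⟨hsub hus, ?_⟩
      rintro (h1 | h2)
      · exact hne h1
      · exact hind v hvs u hus h2
    · intro t ht
      simp only [mem_filter, mem_univ, true_and] at ht ⊢
      obtain ⟨hsub, hind⟩ := ht
      have hvt : v ∉ t := fun h => (hsub h).2 (Or.inl rfl)
      constructor
      · constructor
        · intro u hu
          rcases Finset.mem_insert.mp hu with rfl | hu'
          · exact hv
          · exact (hsub hu').1
        · intro a ha b hb
          rcases Finset.mem_insert.mp ha with rfl | ha'
          · rcases Finset.mem_insert.mp hb with rfl | hb'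
            · exact G.loopless.irrefl _
            · exact fun h => (hsub hb').2 (Or.inr h)
          · rcases Finset.mem_insert.mp hb with rfl | hb'
            · exact fun h => (hsub ha').2 (Or.inr (G.adj_symm h))
            · exact hind a ha' b hb'
      · exact Finset.mem_insert_self v t
    · intro s hs
      simp only [mem_filter, mem_univ, true_and] at hs
      exact Finset.insert_erase hs.2
    · intro t ht
      simp only [mem_filter, mem_univ, true_and] at ht
      have hvt : v ∉ t := fun h => (ht.1 h).2 (Or.inl rfl)
      exact Finset.erase_insert hvt
    · intro s hs
      simp only [mem_filter, mem_univ, true_and] at hs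
      rw [Finset.card_erase_of_mem hs.2]
      have : s.card ≠ 0 := Finset.card_ne_zero_of_mem hs.2
      rw [← pow_succ']
      congr 1
      omega

open scoped Classical in
lemma J_pos_subset : ∀ n : ℕ, ∀ A : Set V, A.ncard ≤ n →
    ∀ x₀ : ℝ, (∀ y ∈ Set.Icc x₀ (0:ℝ), 0 < J G A y) →
    ∀ B ⊆ A, ∀ y ∈ Set.Icc x₀ (0:ℝ), 0 < J G B y := by
  classical
  intro n
  induction n with
  | zero =>
    intro A hcard x₀ hA B hBA y hy
    have hAe : A = ∅ := (Set.ncard_eq_zero (Set.toFinite A)).mp (Nat.le_zero.mp hcard)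
    have hBe : B = A := by rw [hAe] at hBA ⊢; exact Set.subset_empty_iff.mp hBA
    rw [hBe]; exact hA y hy
  | succ n IH =>
    intro A hcard x₀ hA B hBA y hy
    by_cases hBA' : A ⊆ B
    · have : B = A := Set.Subset.antisymm hBA hBA'
      rw [this]; exact hA y hy
    · obtain ⟨v, hvA, hvB⟩ := Set.not_subset.mp hBA'
      -- card of A \ {v}
      have hcard' : (A \ {v}).ncard ≤ n := by
        have := Set.ncard_diff_singleton_lt_of_mem hvA (Set.toFinite A)
        omega
      -- positivity of J (A \ {v}) on [x₀, 0]
      have hA' : ∀ z ∈ Set.Icc x₀ (0:ℝ), 0 < J G (A \ {v}) z := by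
        by_contra hcon
        push_neg at hcon
        set f := J G (A \ {v}) with hf
        set S : Set ℝ := Set.Icc x₀ 0 ∩ {z | f z ≤ 0} with hS
        have hSne : S.Nonempty := by
          obtain ⟨r, hr1, hr2⟩ := hcon
          exact ⟨r, hr1, hr2⟩
        have hSbdd : BddAbove S := ⟨0, fun z hz => hz.1.2⟩
        have hSclosed : IsClosed S :=
          IsClosed.inter isClosed_Icc (isClosed_le (J_continuous G _) continuous_const)
        set r := sSup S with hr
        have hrS : r ∈ S := hSclosed.csSup_mem hSne hSbdd
        have hr0 : r ≤ 0 := hrS.1.2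
        have hrx : x₀ ≤ r := hrS.1.1
        have hfr : f r ≤ 0 := hrS.2
        have hrlt : r < 0 := by
          rcases lt_or_eq_of_le hr0 with h | h
          · exact h
          · exfalso; rw [h] at hfr; rw [hf] at hfr
            simp [J_zero] at hfr; linarith
        have hpos : ∀ z ∈ Set.Ioc r (0:ℝ), 0 < f z := by
          intro z hz
          by_contra hzc
          push_neg at hzc
          have hzS : z ∈ S := ⟨⟨le_trans hrx hz.1.le, hz.2⟩, hzc⟩
          exact absurd (le_csSup hSbdd hzS) (not_le.mpr hz.1)
        have hN : ∀ z ∈ Set.Ioc r (0:ℝ), 0 < J G (A \ ({v} ∪ G.neighborSet v)) z := by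
          intro z hz
          refine IH (A \ {v}) hcard' z (fun w hw => hpos w ⟨lt_of_lt_of_le hz.1 hw.1, hw.2⟩)
            (A \ ({v} ∪ G.neighborSet v)) ?_ z ⟨le_refl z, hz.2⟩
          exact Set.diff_subset_diff_right (Set.subset_union_left)
        have hNr : 0 ≤ J G (A \ ({v} ∪ G.neighborSet v)) r := by
          have hne : (𝓝[Set.Ioc r (0:ℝ)] r).NeBot := by
            rw [← mem_closure_iff_nhdsWithin_neBot, closure_Ioc hrlt.ne]
            exact ⟨le_refl r, hrlt.le⟩
          have htd : Filter.Tendsto (J G (A \ ({v} ∪ G.neighborSet v)))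
              (𝓝[Set.Ioc r (0:ℝ)] r) (𝓝 (J G (A \ ({v} ∪ G.neighborSet v)) r)) :=
            ((J_continuous G _).continuousWithinAt).tendsto
          exact ge_of_tendsto htd (eventually_nhdsWithin_of_forall (fun z hz => (hN z hz).le))
        have hcontra : J G A r ≤ 0 := by
          rw [J_vertex_rec G A hvA r]
          have h2 : r * J G (A \ ({v} ∪ G.neighborSet v)) r ≤ 0 :=
            mul_nonpos_of_nonpos_of_nonneg hrlt.le hNr
          linarith
        exact absurd (hA r ⟨hrx, hr0⟩) (not_lt.mpr hcontra)
      refine IH (A \ {v}) hcard' x₀ hA' B ?_ y hy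
      intro b hb
      exact ⟨hBA hb, fun h => hvB (h ▸ hb)⟩

lemma J_del_congr (u₁ u₂ : V) {A : Set V} (hA : u₁ ∉ A) (x : ℝ) :
    J (G.deleteEdges {s(u₁,u₂)}) A x = J G A x := by
  refine J_congr _ (fun a ha b hb => ?_) x
  rw [SimpleGraph.deleteEdges_adj]
  simp only [Set.mem_singleton_iff, Sym2.eq_iff]
  constructor
  · exact fun h => h.1
  · intro h
    refine ⟨h, ?_⟩
    rintro (⟨rfl, rfl⟩ | ⟨rfl, rfl⟩)
    · exact hA ha
    · exact hA hb

-- largest root is negative, polynomial positive on (ξ, 0]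
lemma largest_neg {ξ : ℝ} (hG : IsLargestRoot G ξ) : ξ < 0 := by
  by_contra h
  push_neg at h
  have := J_one_le G Set.univ h
  rw [← J_univ] at this
  rw [hG.1] at this
  linarith

lemma pos_Ioc {ξ : ℝ} (hG : IsLargestRoot G ξ) :
    ∀ x ∈ Set.Ioc ξ (0:ℝ), 0 < indepPoly G x := by
  intro x hx
  rcases lt_trichotomy (indepPoly G x) 0 with h | h | h
  · exfalso
    have hcont : ContinuousOn (indepPoly G) (Set.Icc x 0) := by
      have : Continuous (indepPoly G) := by
        have := J_continuous G Set.univ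
        have he : indepPoly G = J G Set.univ := funext (fun y => J_univ G y)
        rw [he]; exact this
      exact this.continuousOn
    have h0 : indepPoly G 0 = 1 := by rw [J_univ, J_zero]
    have hIoo : Set.Ioo (indepPoly G x) (indepPoly G 0) ⊆
        indepPoly G '' Set.Ioo x 0 := intermediate_value_Ioo hx.2 hcont
    have h0mem : (0:ℝ) ∈ Set.Ioo (indepPoly G x) (indepPoly G 0) := by
      rw [h0]; exact ⟨h, one_pos⟩
    obtain ⟨y, hy, hy0⟩ := hIoo h0mem
    have := hG.2 y hy0
    have h1 := hx.1
    have h2 := hy.1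
    linarith
  · exfalso
    have := hG.2 x h
    exact absurd hx.1 (not_lt.mpr this)
  · exact h

-- all "sub-polynomials" positive on (ξ, 0]
lemma J_sub_pos {ξ : ℝ} (hG : IsLargestRoot G ξ) (A : Set V) :
    ∀ y ∈ Set.Ioc ξ (0:ℝ), 0 < J G A y := by
  intro y hy
  refine J_pos_subset G (Set.univ : Set V).ncard Set.univ le_rfl y ?_ A (Set.subset_univ A)
    y ⟨le_refl y, hy.2⟩
  intro z hz
  rw [← J_univ]
  exact pos_Ioc G hG z ⟨lt_of_lt_of_le hy.1 hz.1, hz.2⟩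

-- edge recursion
lemma edge_rec {u₁ u₂ : V} (he : G.Adj u₁ u₂) (x : ℝ) :
    indepPoly G x = indepPoly (G.deleteEdges {s(u₁, u₂)}) x
      - x^2 * J G (({u₁, u₂} ∪ G.neighborSet u₁ ∪ G.neighborSet u₂)ᶜ) x := by
  classical
  set Ge := G.deleteEdges {s(u₁,u₂)} with hGe
  have hne : u₁ ≠ u₂ := he.ne
  -- step 1 : vertex recursion for G at u₁
  have e1 : indepPoly G x = J G (Set.univ \ {u₁}) x
      + x * J G (Set.univ \ ({u₁} ∪ G.neighborSet u₁)) x := by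
    rw [J_univ, J_vertex_rec G Set.univ (Set.mem_univ u₁) x]
  -- step 2 : vertex recursion for Ge at u₁
  have e2 : indepPoly Ge x = J Ge (Set.univ \ {u₁}) x
      + x * J Ge (Set.univ \ ({u₁} ∪ Ge.neighborSet u₁)) x := by
    rw [J_univ, J_vertex_rec Ge Set.univ (Set.mem_univ u₁) x]
  -- identify pieces
  have hnb : Ge.neighborSet u₁ = G.neighborSet u₁ \ {u₂} := by
    ext w
    simp only [SimpleGraph.mem_neighborSet, hGe, SimpleGraph.deleteEdges_adj,
      Set.mem_singleton_iff, Sym2.eq_iff, Set.mem_diff]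
    by_cases hw : w = u₂
    · subst hw; simp [hne]
    · simp [hw, hne]
  have hnb2 : Ge.neighborSet u₂ = G.neighborSet u₂ \ {u₁} := by
    ext w
    simp only [SimpleGraph.mem_neighborSet, hGe, SimpleGraph.deleteEdges_adj,
      Set.mem_singleton_iff, Sym2.eq_iff, Set.mem_diff]
    by_cases hw : w = u₁
    · subst hw; simp [hne, Ne.symm hne]
    · simp [hw, hne, Ne.symm hne]
  have hA : Set.univ \ ({u₁} ∪ Ge.neighborSet u₁)
      = (Set.univ \ ({u₁} ∪ G.neighborSet u₁)) ∪ {u₂} := by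
    rw [hnb]
    ext a
    simp only [Set.mem_diff, Set.mem_union, Set.mem_singleton_iff, Set.mem_univ, true_and,
      SimpleGraph.mem_neighborSet]
    by_cases hau : a = u₂
    · subst hau; simp [Ne.symm hne]
    · simp [hau]

  have e3 : J Ge (Set.univ \ {u₁}) x = J G (Set.univ \ {u₁}) x :=
    J_del_congr G u₁ u₂ (by simp) x
  have hu₂A : u₂ ∈ (Set.univ \ ({u₁} ∪ G.neighborSet u₁)) ∪ {u₂} := Or.inr rfl
  have e4 : J Ge ((Set.univ \ ({u₁} ∪ G.neighborSet u₁)) ∪ {u₂}) x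
      = J Ge (((Set.univ \ ({u₁} ∪ G.neighborSet u₁)) ∪ {u₂}) \ {u₂}) x
      + x * J Ge (((Set.univ \ ({u₁} ∪ G.neighborSet u₁)) ∪ {u₂}) \ ({u₂} ∪ Ge.neighborSet u₂)) x :=
    J_vertex_rec Ge _ hu₂A x
  have hs1 : ((Set.univ \ ({u₁} ∪ G.neighborSet u₁)) ∪ {u₂}) \ {u₂}
      = Set.univ \ ({u₁} ∪ G.neighborSet u₁) := by
    ext a
    simp only [Set.mem_diff, Set.mem_union, Set.mem_singleton_iff, Set.mem_univ, true_and,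
      SimpleGraph.mem_neighborSet]
    by_cases hau : a = u₂
    · subst hau; simp [he]
    · simp [hau]
  have hs2 : ((Set.univ \ ({u₁} ∪ G.neighborSet u₁)) ∪ {u₂}) \ ({u₂} ∪ Ge.neighborSet u₂)
      = ({u₁, u₂} ∪ G.neighborSet u₁ ∪ G.neighborSet u₂)ᶜ := by
    rw [hnb2]
    ext a
    simp only [Set.mem_diff, Set.mem_union, Set.mem_singleton_iff, Set.mem_univ, true_and,
      Set.mem_compl_iff, Set.mem_insert_iff, SimpleGraph.mem_neighborSet]
    tauto
  have e5 : J Ge (Set.univ \ ({u₁} ∪ G.neighborSet u₁)) x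
      = J G (Set.univ \ ({u₁} ∪ G.neighborSet u₁)) x :=
    J_del_congr G u₁ u₂ (by simp) x
  have e6 : J Ge (({u₁, u₂} ∪ G.neighborSet u₁ ∪ G.neighborSet u₂)ᶜ) x
      = J G (({u₁, u₂} ∪ G.neighborSet u₁ ∪ G.neighborSet u₂)ᶜ) x :=
    J_del_congr G u₁ u₂ (by simp) x
  rw [hA, e3, e4, hs1, hs2, e5, e6] at e2
  rw [e1, e2]
  ring

end lemmas


open scoped Classical in
/-- If `G∖e ⪰ H∖e'` and `H∖[e'] ⪰ G∖[e]`, then `G ⪰ H`, where `e = u₁u₂` and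
`e' = v₁v₂` are edges of `G` and `H` respectively. -/
theorem indepOrder_of_edge_parts {V W : Type*} [Fintype V] [Fintype W]
    (G : SimpleGraph V) (H : SimpleGraph W) (u₁ u₂ : V) (v₁ v₂ : W)
    (he : G.Adj u₁ u₂) (he' : H.Adj v₁ v₂)
    (ξG ξGe ξHe : ℝ) (hG : IsLargestRoot G ξG)
    (hGe : IsLargestRoot (G.deleteEdges {s(u₁, u₂)}) ξGe)
    (hHe : IsLargestRoot
      (H.induce (({v₁, v₂} ∪ H.neighborSet v₁ ∪ H.neighborSet v₂)ᶜ)) ξHe)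
    (h1 : ∀ x ∈ Set.Icc ξGe (0 : ℝ),
      indepPoly (G.deleteEdges {s(u₁, u₂)}) x ≤
        indepPoly (H.deleteEdges {s(v₁, v₂)}) x)
    (h2 : ∀ x ∈ Set.Icc ξHe (0 : ℝ),
      indepPoly (H.induce (({v₁, v₂} ∪ H.neighborSet v₁ ∪ H.neighborSet v₂)ᶜ)) x ≤
        indepPoly (G.induce (({u₁, u₂} ∪ G.neighborSet u₁ ∪ G.neighborSet u₂)ᶜ)) x) :
    ∀ x ∈ Set.Icc ξG (0 : ℝ), indepPoly G x ≤ indepPoly H x := by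
  have hξG0 : ξG < 0 := largest_neg G hG
  have hξGe0 : ξGe < 0 := largest_neg _ hGe
  have hξHe0 : ξHe < 0 := largest_neg _ hHe
  -- Step 1 : ξGe ≤ ξG
  have step1 : ξGe ≤ ξG := by
    by_contra hcon
    push_neg at hcon
    have hmem : ξGe ∈ Set.Ioc ξG (0:ℝ) := ⟨hcon, hξGe0.le⟩
    have hrec := edge_rec G he ξGe
    rw [hGe.1] at hrec
    have hpos := pos_Ioc G hG ξGe hmem
    have hJ := J_sub_pos G hG (({u₁, u₂} ∪ G.neighborSet u₁ ∪ G.neighborSet u₂)ᶜ) ξGe hmem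
    nlinarith [sq_nonneg ξGe]
  -- Step 2 : ξHe ≤ ξGe
  have step2 : ξHe ≤ ξGe := by
    by_contra hcon
    push_neg at hcon
    have hmem : ξHe ∈ Set.Ioc ξGe (0:ℝ) := ⟨hcon, hξHe0.le⟩
    -- positivity of the H∖e' polynomial and its sub-polynomials above ξGe
    have hpos : 0 < J (H.deleteEdges {s(v₁, v₂)})
        (({v₁, v₂} ∪ H.neighborSet v₁ ∪ H.neighborSet v₂)ᶜ) ξHe := by
      refine J_pos_subset (H.deleteEdges {s(v₁, v₂)}) (Set.univ : Set W).ncard Set.univ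
        le_rfl ξHe ?_ _ (Set.subset_univ _) ξHe ⟨le_refl _, hξHe0.le⟩
      intro z hz
      rw [← J_univ]
      have hz' : z ∈ Set.Ioc ξGe (0:ℝ) := ⟨lt_of_lt_of_le hcon hz.1, hz.2⟩
      have := h1 z ⟨hz'.1.le, hz.2⟩
      have := pos_Ioc _ hGe z hz'
      linarith
    have heq : J (H.deleteEdges {s(v₁, v₂)})
        (({v₁, v₂} ∪ H.neighborSet v₁ ∪ H.neighborSet v₂)ᶜ) ξHe
        = indepPoly (H.induce (({v₁, v₂} ∪ H.neighborSet v₁ ∪ H.neighborSet v₂)ᶜ)) ξHe := by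
      rw [J_induce, J_del_congr H v₁ v₂ (by simp) ξHe]
    rw [heq, hHe.1] at hpos
    exact lt_irrefl 0 hpos
  -- Final assembly
  intro x hx
  have hx1 : x ∈ Set.Icc ξGe (0:ℝ) := ⟨le_trans step1 hx.1, hx.2⟩
  have hx2 : x ∈ Set.Icc ξHe (0:ℝ) := ⟨le_trans (le_trans step2 step1) hx.1, hx.2⟩
  have hrG := edge_rec G he x
  have hrH := edge_rec H he' x
  rw [← J_induce] at hrG hrH
  have hh1 := h1 x hx1
  have hh2 := h2 x hx2
  have hmul := mul_le_mul_of_nonneg_left hh2 (sq_nonneg x)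
  linarith
end

section
/- Let n₁,...,n_k, m₁,...,m_k and x₁,...,x_t be real numbers. Then the multiset {n₁,...,n_k} lexicographically dominates {m₁,...,m_k} (as nonincreasing rearrangements) if and only if the multiset {n₁,...,n_k, x₁,...,x_t} lexicographically dominates {m₁,...,m_k, x₁,...,x_t}. -/
open Finset

/-- `A ⪰ B` for multisets of reals: the nonincreasing rearrangement of `A` is
lexicographically at least that of `B` (equal, or strictly larger at the first
index of disagreement). -/
def MultisetLexGe (A B : Multiset ℝ) : Prop :=
  A.sort (· ≥ ·) = B.sort (· ≥ ·) ∨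
    ∃ j : ℕ, (∀ i : ℕ, i < j →
        (A.sort (· ≥ ·)).getD i 0 = (B.sort (· ≥ ·)).getD i 0) ∧
      (B.sort (· ≥ ·)).getD j 0 < (A.sort (· ≥ ·)).getD j 0

lemma sorted_drop_le (l : List ℝ) (hs : l.Pairwise (· ≥ ·)) (j : ℕ) (hj : j < l.length) :
    ∀ x ∈ l.drop j, x ≤ l[j] := by
  intro x hx
  obtain ⟨i, hi, rfl⟩ := List.mem_iff_getElem.mp hx
  rw [List.getElem_drop]
  have hji : j + i < l.length := by
    have := hi
    rw [List.length_drop] at this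
    omega
  have := hs.rel_get_of_le (a := ⟨j, hj⟩) (b := ⟨j + i, hji⟩) (by simp)
  simpa using this

lemma key_lemma (A B : Multiset ℝ) (hcard : Multiset.card A = Multiset.card B)
    (j : ℕ)
    (hpre : ∀ i : ℕ, i < j →
        (A.sort (· ≥ ·)).getD i 0 = (B.sort (· ≥ ·)).getD i 0)
    (hj : (B.sort (· ≥ ·)).getD j 0 < (A.sort (· ≥ ·)).getD j 0) :
    ∃ y ∈ A - B, ∀ z ∈ B - A, z < y := by
  set la := A.sort (· ≥ ·) with hla
  set lb := B.sort (· ≥ ·) with hlb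
  have hsa : la.Pairwise (· ≥ ·) := Multiset.pairwise_sort _ _
  have hsb : lb.Pairwise (· ≥ ·) := Multiset.pairwise_sort _ _
  have hlenA : la.length = Multiset.card A := Multiset.length_sort _
  have hlenB : lb.length = Multiset.card B := Multiset.length_sort _
  have hlen : la.length = lb.length := by rw [hlenA, hlenB, hcard]
  have hjlt : j < la.length := by
    by_contra h
    push_neg at h
    rw [List.getD_eq_default _ _ h, List.getD_eq_default _ _ (hlen ▸ h)] at hj
    exact lt_irrefl _ hj
  have hjlb : j < lb.length := hlen ▸ hjlt
  set t := la[j] with ht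
  have hj' : lb[j] < t := by
    rwa [List.getD_eq_getElem _ _ hjlt, List.getD_eq_getElem _ _ hjlb] at hj
  have hcoeA : (la : Multiset ℝ) = A := Multiset.sort_eq _ _
  have hcoeB : (lb : Multiset ℝ) = B := Multiset.sort_eq _ _
  -- take j prefixes agree
  have htake : la.take j = lb.take j := by
    apply List.ext_getElem
    · simp [hlen]
    · intro i h1 h2
      have hij : i < j := by
        simpa using lt_of_lt_of_le h1 (by simp [List.length_take])
      rw [List.getElem_take, List.getElem_take]
      have := hpre i hij
      rwa [List.getD_eq_getElem _ _ (hij.trans hjlt),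
        List.getD_eq_getElem _ _ (hij.trans hjlb)] at this
  -- counting elements ≥ t
  have h1 : j + 1 ≤ la.countP (fun x => decide (t ≤ x)) := by
    have hsub : (la.take (j + 1)).countP (fun x => decide (t ≤ x)) ≤
        la.countP (fun x => decide (t ≤ x)) :=
      (List.take_sublist _ _).countP_le
    have hall : (la.take (j + 1)).countP (fun x => decide (t ≤ x)) =
        (la.take (j + 1)).length := by
      rw [List.countP_eq_length]
      intro a ha
      obtain ⟨i, hi, rfl⟩ := List.mem_iff_getElem.mp ha
      have hij : i ≤ j := by
        have : i < j + 1 := lt_of_lt_of_le hi (by simp [List.length_take])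
        omega
      rw [List.getElem_take]
      have := hsa.rel_get_of_le (a := ⟨i, by omega⟩) (b := ⟨j, hjlt⟩) (by simpa)
      simpa using this
    have hlt : (la.take (j + 1)).length = j + 1 := by
      simp [List.length_take]; omega
    omega
  have h2 : lb.countP (fun x => decide (t ≤ x)) ≤ j := by
    conv_lhs => rw [← List.take_append_drop j lb]
    rw [List.countP_append]
    have hdrop : (lb.drop j).countP (fun x => decide (t ≤ x)) = 0 := by
      rw [List.countP_eq_zero]
      intro a ha
      have := sorted_drop_le lb hsb j hjlb a ha
      simp only [decide_eq_true_eq]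
      intro h
      exact absurd (h.trans this) (not_le.mpr hj')
    have htk : (lb.take j).countP (fun x => decide (t ≤ x)) ≤ j := by
      calc (lb.take j).countP (fun x => decide (t ≤ x)) ≤ (lb.take j).length :=
            List.countP_le_length
        _ ≤ j := by simp [List.length_take]
    omega
  -- transfer to multiset countP
  have hA' : j + 1 ≤ Multiset.countP (fun x => t ≤ x) A := by
    rw [← hcoeA, Multiset.coe_countP]; exact h1
  have hB' : Multiset.countP (fun x => t ≤ x) B ≤ j := by
    rw [← hcoeB, Multiset.coe_countP]; exact h2
  have hpos : 0 < Multiset.countP (fun x => t ≤ x) (A - B) := by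
    have hle : A ≤ A - B + B := le_tsub_add
    have := Multiset.countP_le_of_le (fun x => t ≤ x) hle
    rw [Multiset.countP_add] at this
    omega
  obtain ⟨y, hy, hty⟩ := Multiset.countP_pos.mp hpos
  refine ⟨y, hy, ?_⟩
  intro z hz
  by_contra hzy
  push_neg at hzy
  have htz : t ≤ z := hty.trans hzy
  -- count z in B ≤ count z in A
  have hcount : Multiset.count z B ≤ Multiset.count z A := by
    have hb : Multiset.count z B = lb.count z := by rw [← hcoeB, Multiset.coe_count]
    have ha : Multiset.count z A = la.count z := by rw [← hcoeA, Multiset.coe_count]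
    rw [hb, ha]
    have hdrop0 : (lb.drop j).count z = 0 := by
      rw [List.count_eq_zero]
      intro hmem
      have := sorted_drop_le lb hsb j hjlb z hmem
      exact absurd (htz.trans this) (not_le.mpr hj')
    calc lb.count z = (lb.take j).count z + (lb.drop j).count z := by
          rw [← List.count_append, List.take_append_drop]
      _ = (la.take j).count z := by rw [hdrop0, htake]; ring
      _ ≤ la.count z := (List.take_sublist _ _).count_le _
  have hzBA : Multiset.count z A < Multiset.count z B := by
    have := Multiset.count_pos.mpr hz
    rw [Multiset.count_sub] at this
    omega
  omega

lemma lexGe_iff_char (A B : Multiset ℝ) (hcard : Multiset.card A = Multiset.card B) :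
    MultisetLexGe A B ↔ (A = B ∨ ∃ y ∈ A - B, ∀ z ∈ B - A, z < y) := by
  constructor
  · rintro (h | ⟨j, hpre, hj⟩)
    · left
      calc A = ((A.sort (· ≥ ·) : List ℝ) : Multiset ℝ) := (Multiset.sort_eq _ _).symm
        _ = ((B.sort (· ≥ ·) : List ℝ) : Multiset ℝ) := by rw [h]
        _ = B := Multiset.sort_eq _ _
    · exact Or.inr (key_lemma A B hcard j hpre hj)
  · rintro (rfl | ⟨y, hy, hall⟩)
    · exact Or.inl rfl
    · have hne : A ≠ B := by
        rintro rfl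
        simp at hy
      have hlen : (A.sort (· ≥ ·)).length = (B.sort (· ≥ ·)).length := by
        rw [Multiset.length_sort, Multiset.length_sort, hcard]
      have hsne : A.sort (· ≥ ·) ≠ B.sort (· ≥ ·) := by
        intro h
        exact hne (by
          calc A = ((A.sort (· ≥ ·) : List ℝ) : Multiset ℝ) := (Multiset.sort_eq _ _).symm
            _ = ((B.sort (· ≥ ·) : List ℝ) : Multiset ℝ) := by rw [h]
            _ = B := Multiset.sort_eq _ _)
      have hex : ∃ n, (A.sort (· ≥ ·)).getD n 0 ≠ (B.sort (· ≥ ·)).getD n 0 := by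
        by_contra h
        push_neg at h
        apply hsne
        apply List.ext_getElem hlen
        intro i h1 h2
        have := h i
        rwa [List.getD_eq_getElem _ _ h1, List.getD_eq_getElem _ _ h2] at this
      classical
      let j := Nat.find hex
      have hjspec : (A.sort (· ≥ ·)).getD j 0 ≠ (B.sort (· ≥ ·)).getD j 0 := Nat.find_spec hex
      have hjmin : ∀ i, i < j →
          (A.sort (· ≥ ·)).getD i 0 = (B.sort (· ≥ ·)).getD i 0 := by
        intro i hi
        have := Nat.find_min hex hi
        push_neg at this
        exact this
      rcases lt_trichotomy ((B.sort (· ≥ ·)).getD j 0) ((A.sort (· ≥ ·)).getD j 0) with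
        h | h | h
      · exact Or.inr ⟨j, hjmin, h⟩
      · exact absurd h.symm hjspec
      · -- symmetric case: contradiction
        obtain ⟨z, hz, hallz⟩ := key_lemma B A hcard.symm j (fun i hi => (hjmin i hi).symm) h
        exact absurd (hall z hz) (not_lt.mpr (hallz y hy).le)

/-- `{n₁,…,n_k} ⪰ {m₁,…,m_k}` iff `{n₁,…,n_k,x₁,…,x_t} ⪰ {m₁,…,m_k,x₁,…,x_t}`. -/
theorem multisetLexGe_add_iff (A B C : Multiset ℝ) (hcard : Multiset.card A = Multiset.card B) :
    MultisetLexGe A B ↔ MultisetLexGe (A + C) (B + C) := by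
  rw [lexGe_iff_char A B hcard, lexGe_iff_char (A + C) (B + C) (by simp [hcard])]
  rw [add_tsub_add_eq_tsub_right, add_tsub_add_eq_tsub_right, add_left_inj]
end

section
/- Let n₁,...,n_k, m₁,...,m_k and x₁,...,x_t be real numbers. Then {n₁,...,n_k} ⪰_d {m₁,...,m_k} (partial sums of the nonincreasing rearrangement of the n's dominate those of the m's) if and only if {n₁,...,n_k, x₁,...,x_t} ⪰_d {m₁,...,m_k, x₁,...,x_t}. -/
open Finset

/-- `A ⪰_d B` for multisets of reals: writing `A` and `B` in nonincreasing
order, every partial sum of `A` is at least the corresponding partial sum of `B`. -/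
def MultisetDomGe (A B : Multiset ℝ) : Prop :=
  ∀ j : ℕ, ((B.sort (· ≥ ·)).take j).sum ≤ ((A.sort (· ≥ ·)).take j).sum

namespace DomGeAux

open List

lemma take_takeWhile_sum (x : ℝ) (l : List ℝ) (j : ℕ)
    (hj : j ≤ (l.takeWhile fun b => ¬ x ≥ b).length) :
    (l.takeWhile fun b => ¬ x ≥ b).take j = l.take j := by
  rw [prefix_iff_eq_take.mp (l.takeWhile_prefix _), take_take, min_eq_left hj]

lemma sum_take_ins_low (x : ℝ) (l : List ℝ) (j : ℕ)
    (hj : j ≤ (l.takeWhile fun b => ¬ x ≥ b).length) :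
    ((l.orderedInsert (· ≥ ·) x).take j).sum = (l.take j).sum := by
  rw [List.orderedInsert_eq_take_drop, take_append_of_le_length hj,
    take_takeWhile_sum x l j hj]

lemma sum_take_ins_high (x : ℝ) (l : List ℝ) (j : ℕ)
    (hj : (l.takeWhile fun b => ¬ x ≥ b).length < j) :
    ((l.orderedInsert (· ≥ ·) x).take j).sum = x + (l.take (j - 1)).sum := by
  set u := l.takeWhile fun b => ¬ x ≥ b with hu
  set d := l.dropWhile fun b => ¬ x ≥ b with hd
  have hl' : u ++ d = l := List.takeWhile_append_dropWhile
  rw [List.orderedInsert_eq_take_drop]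
  rw [take_append, take_of_length_le (le_of_lt hj),
    show j - u.length = (j - u.length - 1) + 1 from by omega, take_succ_cons]
  conv_rhs => rw [← hl', take_append,
    take_of_length_le (show u.length ≤ j - 1 from by omega)]
  rw [List.sum_append, List.sum_cons, List.sum_append,
    show j - 1 - u.length = j - u.length - 1 from by omega]
  ring

lemma p_le_length (x : ℝ) (l : List ℝ) :
    (l.takeWhile fun b => ¬ x ≥ b).length ≤ l.length :=
  (l.takeWhile_prefix _).length_le

lemma elem_ge_of_lt_p (x : ℝ) (l : List ℝ) (i : ℕ)
    (hi : i < (l.takeWhile fun b => ¬ x ≥ b).length) :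
    ∀ (h : i < l.length), x ≤ l[i] := by
  intro h
  have h1 : (l.takeWhile fun b => ¬ x ≥ b)[i] = l[i] :=
    (l.takeWhile_prefix _).getElem hi
  have h2 := List.mem_takeWhile_imp (List.getElem_mem hi)
  rw [h1] at h2
  simp at h2
  linarith

lemma elem_le_of_ge_p (x : ℝ) (l : List ℝ) (hl : l.Pairwise (· ≥ ·)) (i : ℕ)
    (hp : (l.takeWhile fun b => ¬ x ≥ b).length ≤ i) :
    ∀ (h : i < l.length), l[i] ≤ x := by
  intro h
  set u := l.takeWhile fun b => ¬ x ≥ b with hu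
  set d := l.dropWhile fun b => ¬ x ≥ b with hd
  have hl' : u ++ d = l := List.takeWhile_append_dropWhile
  have hpl : u.length < l.length := lt_of_le_of_lt hp h
  have hdlen : 0 < d.length := by
    have := congrArg List.length hl'
    rw [List.length_append] at this
    omega
  have h0 := List.dropWhile_get_zero_not (fun b => ¬ x ≥ b) l hdlen
  have hpe : l[u.length] = d.get ⟨0, hdlen⟩ := by
    rw [List.getElem_of_eq hl'.symm hpl,
      List.getElem_append_right (le_refl u.length)]
    simp [List.get_eq_getElem]
  have h0' : x ≥ (l.dropWhile fun b => ¬ x ≥ b).get ⟨0, hdlen⟩ := by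
    simpa using h0
  have hxl : x ≥ l[u.length] := by
    rw [hpe]; exact h0'
  haveI : Std.Refl (α := ℝ) (· ≥ ·) := ⟨fun a => le_refl a⟩
  have hmono : l[u.length] ≥ l[i] :=
    hl.rel_get_of_le (a := ⟨u.length, hpl⟩) (b := ⟨i, h⟩) hp
  linarith

lemma F3 (x : ℝ) (l : List ℝ) (j : ℕ) (h1 : 1 ≤ j)
    (h2 : j ≤ (l.takeWhile fun b => ¬ x ≥ b).length) :
    x + (l.take (j - 1)).sum ≤ (l.take j).sum := by
  have hlen : j - 1 < l.length := lt_of_lt_of_le (by omega) (p_le_length x l)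
  have := List.sum_take_succ l (j - 1) hlen
  rw [show j - 1 + 1 = j from by omega] at this
  rw [this]
  have := elem_ge_of_lt_p x l (j - 1) (by omega) hlen
  linarith

lemma F4 (x : ℝ) (l : List ℝ) (hl : l.Pairwise (· ≥ ·)) (j : ℕ)
    (h1 : (l.takeWhile fun b => ¬ x ≥ b).length < j) (h2 : j ≤ l.length) :
    (l.take j).sum ≤ x + (l.take (j - 1)).sum := by
  have hlen : j - 1 < l.length := by omega
  have hs := List.sum_take_succ l (j - 1) hlen
  rw [show j - 1 + 1 = j from by omega] at hs
  rw [hs]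
  have := elem_le_of_ge_p x l hl (j - 1) (by omega) hlen
  linarith

lemma sort_cons (x : ℝ) (A : Multiset ℝ) :
    (x ::ₘ A).sort (· ≥ ·) = (A.sort (· ≥ ·)).orderedInsert (· ≥ ·) x := by
  haveI : IsAntisymm ℝ (· ≥ ·) := ⟨fun a b h1 h2 => le_antisymm h2 h1⟩
  have hperm : (x ::ₘ A).sort (· ≥ ·) ~ (A.sort (· ≥ ·)).orderedInsert (· ≥ ·) x := by
    have hco : (((x ::ₘ A).sort (· ≥ ·) : List ℝ) : Multiset ℝ)
        = ((x :: A.sort (· ≥ ·) : List ℝ) : Multiset ℝ) := by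
      rw [Multiset.sort_eq, ← Multiset.cons_coe, Multiset.sort_eq]
    exact (Multiset.coe_eq_coe.mp hco).trans (List.perm_orderedInsert _ _ _).symm
  exact List.Perm.eq_of_pairwise (fun a b _ _ h1 h2 => le_antisymm h2 h1) (Multiset.pairwise_sort _ _)
    ((Multiset.pairwise_sort A (· ≥ ·)).orderedInsert x _) hperm

lemma domGe_cons_iff (x : ℝ) (A B : Multiset ℝ)
    (hcard : Multiset.card A = Multiset.card B) :
    MultisetDomGe A B ↔ MultisetDomGe (x ::ₘ A) (x ::ₘ B) := by
  set lA := A.sort (· ≥ ·) with hlA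
  set lB := B.sort (· ≥ ·) with hlB
  have hsA : lA.Pairwise (· ≥ ·) := Multiset.pairwise_sort _ _
  have hsB : lB.Pairwise (· ≥ ·) := Multiset.pairwise_sort _ _
  have hlen : lA.length = lB.length := by
    rw [hlA, hlB, Multiset.length_sort, Multiset.length_sort, hcard]
  set pA := (lA.takeWhile fun b => ¬ x ≥ b).length with hpA
  set pB := (lB.takeWhile fun b => ¬ x ≥ b).length with hpB
  have hpAl : pA ≤ lA.length := p_le_length x lA
  have hpBl : pB ≤ lB.length := p_le_length x lB
  constructor
  · intro h j
    rw [MultisetDomGe] at h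
    simp only [sort_cons, ← hlA, ← hlB]
    rcases le_or_gt j pA with hA | hA <;> rcases le_or_gt j pB with hB | hB
    · rw [sum_take_ins_low x lA j hA, sum_take_ins_low x lB j hB]
      exact h j
    · rw [sum_take_ins_low x lA j hA, sum_take_ins_high x lB j hB]
      have h3 := F3 x lA j (by omega) hA
      have := h (j - 1)
      linarith
    · rw [sum_take_ins_high x lA j hA, sum_take_ins_low x lB j hB]
      have h4 := F4 x lA hsA j hA (by omega)
      have := h j
      linarith
    · rw [sum_take_ins_high x lA j hA, sum_take_ins_high x lB j hB]
      have := h (j - 1)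
      linarith
  · intro h
    rw [MultisetDomGe] at h
    simp only [sort_cons, ← hlA, ← hlB] at h
    have main : ∀ j, j ≤ lA.length → (lB.take j).sum ≤ (lA.take j).sum := by
      intro j hj
      rcases le_or_gt j pA with hA | hA
      · have h1 : (lB.take j).sum ≤ ((lB.orderedInsert (· ≥ ·) x).take j).sum := by
          rcases le_or_gt j pB with hB | hB
          · rw [sum_take_ins_low x lB j hB]
          · rw [sum_take_ins_high x lB j hB]
            have := F4 x lB hsB j hB (by omega)
            linarith
        calc (lB.take j).sum ≤ ((lB.orderedInsert (· ≥ ·) x).take j).sum := h1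
          _ ≤ ((lA.orderedInsert (· ≥ ·) x).take j).sum := h j
          _ = (lA.take j).sum := sum_take_ins_low x lA j hA
      · have hA1 : ((lA.orderedInsert (· ≥ ·) x).take (j + 1)).sum
            = x + (lA.take j).sum := by
          have := sum_take_ins_high x lA (j + 1) (by omega)
          simpa using this
        have hB1 : x + (lB.take j).sum
            ≤ ((lB.orderedInsert (· ≥ ·) x).take (j + 1)).sum := by
          rcases le_or_gt (j + 1) pB with hB | hB
          · rw [sum_take_ins_low x lB (j + 1) hB]
            have := F3 x lB (j + 1) (by omega) hB
            simpa using this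
          · rw [sum_take_ins_high x lB (j + 1) hB]
            simp
        have := h (j + 1)
        rw [hA1] at this
        linarith
    intro j
    rcases le_or_gt j lA.length with hj | hj
    · exact main j hj
    · have e1 : lA.take j = lA := take_of_length_le (le_of_lt hj)
      have e2 : lB.take j = lB := take_of_length_le (by omega)
      have e3 : lA.take lA.length = lA := take_of_length_le le_rfl
      have e4 : lB.take lA.length = lB := take_of_length_le (by omega)
      have := main lA.length le_rfl
      rw [e3, e4] at this
      rw [e1, e2]
      exact this

end DomGeAux

/-- `{n₁,…,n_k} ⪰_d {m₁,…,m_k}` iff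
`{n₁,…,n_k,x₁,…,x_t} ⪰_d {m₁,…,m_k,x₁,…,x_t}`. -/
theorem multisetDomGe_add_iff (A B C : Multiset ℝ) (hcard : Multiset.card A = Multiset.card B) :
    MultisetDomGe A B ↔ MultisetDomGe (A + C) (B + C) := by
  induction C using Multiset.induction_on with
  | empty => simp
  | cons x C ih =>
    rw [ih, Multiset.add_cons, Multiset.add_cons]
    exact DomGeAux.domGe_cons_iff x (A + C) (B + C) (by simp [hcard])
end
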